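/- Let π : ℝⁿ × ℝᵖ → ℝᵐ be a C¹ policy, and with f, r C¹, fix x₀ ∈ ℝⁿ and define for each w ∈ ℝᵖ the trajectory x₀(w) = x₀, a_t(w) = π(x_t(w), w), x_{t+1}(w) = f(x_t(w), a_t(w)), and the total reward J(w) = Σ_{t=0}^{F−1} γᵗ r(x_t(w), a_t(w)). Define the value-to-go functions V_t : ℝⁿ × ℝᵖ → ℝ by V_F(x, w) = 0 and V_t(x, w) = r(x, π(x, w)) + γ V_{t+1}(f(x, π(x, w)), w). Then J is differentiable and its gradient satisfies ∇_w J(w) = Σ_{t=0}^{F−1} γᵗ (D_w π(x_t(w), w))ᵀ ( ∇_a r(x_t(w), a_t(w)) + γ (D_a f(x_t(w), a_t(w)))ᵀ ∇_x V_{t+1}(x_{t+1}(w), w) ). -/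

import Mathlib

/-!
Along the trajectory, `V t (x_t(w), w)` is the discounted reward-to-go from time `t`, so
`J w = V 0 (x₀, w)`. Differentiate the Bellman recursion
`V t (x, w') = r (x, π (x, w')) + γ * V (t + 1) (f (x, π (x, w')), w')` in `w'` only, with `x` frozen
at `x_t(w)`: by the chain rule this gives the `t`-th term of the expansion plus `γ` times the same
kind of gradient of `V (t + 1)` at `x_{t+1}(w)`. Unrolling this backward recursion from `t = 0` to
`F`, where `V F = 0`, yields the formula.
-/

open Matrix

/-- Gradient of a scalar function, as a vector of partial derivatives. -/
noncomputable def grad {k : ℕ} (g : (Fin k → ℝ) → ℝ) (x : Fin k → ℝ) : Fin k → ℝ :=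
  fun i => fderiv ℝ g x (Pi.single i 1)

/-- Gradient of `r` in the action variable. -/
noncomputable def gradA {n m : ℕ} (r : (Fin n → ℝ) × (Fin m → ℝ) → ℝ)
    (x : Fin n → ℝ) (a : Fin m → ℝ) : Fin m → ℝ :=
  fun i => fderiv ℝ (fun b => r (x, b)) a (Pi.single i 1)

/-- Jacobian of `f` in the action variable (rows indexed by output components). -/
noncomputable def jacA {n m : ℕ} (f : (Fin n → ℝ) × (Fin m → ℝ) → Fin n → ℝ)
    (x : Fin n → ℝ) (a : Fin m → ℝ) : Matrix (Fin n) (Fin m) ℝ :=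
  Matrix.of fun j i => fderiv ℝ (fun b => f (x, b) j) a (Pi.single i 1)

/-- Jacobian of the policy `π` in the weight variable (an `m × p` matrix). -/
noncomputable def jacWpi {n m p : ℕ}
    (π : (Fin n → ℝ) × (Fin p → ℝ) → Fin m → ℝ)
    (x : Fin n → ℝ) (w : Fin p → ℝ) : Matrix (Fin m) (Fin p) ℝ :=
  Matrix.of fun j i => fderiv ℝ (fun w' => π (x, w') j) w (Pi.single i 1)

/-- The trajectory generated from `x₀` by the policy `π(·, w)`. -/
def trajW {n m p : ℕ} (f : (Fin n → ℝ) × (Fin m → ℝ) → Fin n → ℝ)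
    (π : (Fin n → ℝ) × (Fin p → ℝ) → Fin m → ℝ)
    (x₀ : Fin n → ℝ) (w : Fin p → ℝ) : ℕ → Fin n → ℝ
  | 0 => x₀
  | t + 1 => f (trajW f π x₀ w t, π (trajW f π x₀ w t, w))

theorem fderiv_apply_eq_dotProduct_grad {k : ℕ} (g : (Fin k → ℝ) → ℝ) (x v : Fin k → ℝ) :
    fderiv ℝ g x v = v ⬝ᵥ grad g x := by
  have hv : v = ∑ i, v i • Pi.single i (1 : ℝ) := by
    simp_rw [← Pi.single_smul, smul_eq_mul, mul_one, Finset.univ_sum_single]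
  conv_lhs => rw [hv]
  simp [dotProduct, grad]

theorem grad_add {k : ℕ} {g h : (Fin k → ℝ) → ℝ} {x : Fin k → ℝ}
    (hg : DifferentiableAt ℝ g x) (hh : DifferentiableAt ℝ h x) :
    grad (fun y => g y + h y) x = grad g x + grad h x := by
  ext i
  exact congrArg (· (Pi.single i 1)) (fderiv_add hg hh)

theorem grad_const_mul {k : ℕ} {g : (Fin k → ℝ) → ℝ} {x : Fin k → ℝ}
    (hg : DifferentiableAt ℝ g x) (c : ℝ) :
    grad (fun y => c * g y) x = c • grad g x := by
  ext i
  rw [grad, fderiv_const_mul hg]; rfl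

/-- `jacWpi π x` and `jacA f x` are definitionally the Jacobians of the partial maps
`fun w' => π (x, w')` and `fun a => f (x, a)`. -/
noncomputable def jacobian {k l : ℕ} (φ : (Fin k → ℝ) → Fin l → ℝ) (w : Fin k → ℝ) :
    Matrix (Fin l) (Fin k) ℝ :=
  Matrix.of fun j i => fderiv ℝ (fun w' => φ w' j) w (Pi.single i 1)

theorem jacobian_mulVec {k l : ℕ} {φ : (Fin k → ℝ) → Fin l → ℝ} {w : Fin k → ℝ}
    (hφ : DifferentiableAt ℝ φ w) (v : Fin k → ℝ) :
    jacobian φ w *ᵥ v = fderiv ℝ φ w v := by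
  ext j
  calc (jacobian φ w *ᵥ v) j = v ⬝ᵥ grad (fun w' => φ w' j) w := dotProduct_comm _ _
    _ = fderiv ℝ (fun w' => φ w' j) w v := (fderiv_apply_eq_dotProduct_grad _ _ _).symm
    _ = fderiv ℝ φ w v j := by rw [fderiv_apply hφ j]; rfl

theorem transpose_mulVec_apply {R ι κ : Type*} [NonAssocSemiring R] [Fintype ι] [Fintype κ]
    [DecidableEq κ] (A : Matrix ι κ R) (u : ι → R) (i : κ) :
    (Aᵀ *ᵥ u) i = (A *ᵥ Pi.single i 1) ⬝ᵥ u := by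
  rw [mulVec_single_one]; rfl

theorem grad_comp {k l : ℕ} {g : (Fin l → ℝ) → ℝ} {φ : (Fin k → ℝ) → Fin l → ℝ}
    {w : Fin k → ℝ} (hg : DifferentiableAt ℝ g (φ w)) (hφ : DifferentiableAt ℝ φ w) :
    grad (g ∘ φ) w = (jacobian φ w)ᵀ *ᵥ grad g (φ w) := by
  ext i
  rw [transpose_mulVec_apply, jacobian_mulVec hφ, ← fderiv_apply_eq_dotProduct_grad, grad,
    fderiv_comp w hg hφ, ContinuousLinearMap.comp_apply]

theorem jacobian_comp {k l q : ℕ} {g : (Fin l → ℝ) → Fin q → ℝ} {φ : (Fin k → ℝ) → Fin l → ℝ}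
    {w : Fin k → ℝ} (hg : DifferentiableAt ℝ g (φ w)) (hφ : DifferentiableAt ℝ φ w) :
    jacobian (g ∘ φ) w = jacobian g (φ w) * jacobian φ w := by
  refine ext_of_mulVec_single fun i => ?_
  rw [← mulVec_mulVec, jacobian_mulVec (hg.comp w hφ), jacobian_mulVec hφ, jacobian_mulVec hg,
    fderiv_comp w hg hφ, ContinuousLinearMap.comp_apply]

section Partial

variable {E F G : Type*} [NormedAddCommGroup E] [NormedSpace ℝ E]
  [NormedAddCommGroup F] [NormedSpace ℝ F] [NormedAddCommGroup G] [NormedSpace ℝ G]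
  {g : E × F → G} {x : E} {a : F}

theorem fderiv_comp_prodMk_left (h : DifferentiableAt ℝ g (x, a)) :
    fderiv ℝ (fun y => g (y, a)) x = (fderiv ℝ g (x, a)).comp (.inl ℝ E F) :=
  (h.hasFDerivAt.comp x (hasFDerivAt_prodMk_left x a)).fderiv

theorem fderiv_comp_prodMk_right (h : DifferentiableAt ℝ g (x, a)) :
    fderiv ℝ (fun b => g (x, b)) a = (fderiv ℝ g (x, a)).comp (.inr ℝ E F) :=
  (h.hasFDerivAt.comp a (hasFDerivAt_prodMk_right x a)).fderiv

end Partial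

theorem grad_comp_prodMk {k l : ℕ} {H : (Fin l → ℝ) × (Fin k → ℝ) → ℝ}
    {ψ : (Fin k → ℝ) → Fin l → ℝ} {w : Fin k → ℝ}
    (hH : DifferentiableAt ℝ H (ψ w, w)) (hψ : DifferentiableAt ℝ ψ w) :
    grad (fun w' => H (ψ w', w')) w =
      (jacobian ψ w)ᵀ *ᵥ grad (fun y => H (y, w)) (ψ w) + grad (fun w' => H (ψ w, w')) w := by
  have hD : HasFDerivAt (fun w' => H (ψ w', w')) _ w :=
    hH.hasFDerivAt.comp (f := fun w' => (ψ w', w')) w (hψ.hasFDerivAt.prodMk (hasFDerivAt_id w))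
  ext i
  rw [Pi.add_apply, transpose_mulVec_apply, jacobian_mulVec hψ, ← fderiv_apply_eq_dotProduct_grad,
    grad, grad, hD.fderiv, fderiv_comp_prodMk_left hH, fderiv_comp_prodMk_right hH]
  simp [← map_add]

section Bellman

variable {n m p : ℕ} {γ : ℝ} {f : (Fin n → ℝ) × (Fin m → ℝ) → Fin n → ℝ}
  {r : (Fin n → ℝ) × (Fin m → ℝ) → ℝ} {π : (Fin n → ℝ) × (Fin p → ℝ) → Fin m → ℝ}

theorem grad_bellman_backup {W : (Fin n → ℝ) × (Fin p → ℝ) → ℝ} {x : Fin n → ℝ}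
    {w : Fin p → ℝ} (hπ : DifferentiableAt ℝ π (x, w)) (hf : DifferentiableAt ℝ f (x, π (x, w)))
    (hr : DifferentiableAt ℝ r (x, π (x, w))) (hW : DifferentiableAt ℝ W (f (x, π (x, w)), w)) :
    grad (fun w' => r (x, π (x, w')) + γ * W (f (x, π (x, w')), w')) w =
      (jacWpi π x w)ᵀ *ᵥ (gradA r x (π (x, w)) +
        γ • (jacA f x (π (x, w)))ᵀ *ᵥ grad (fun y => W (y, w)) (f (x, π (x, w)))) +
      γ • grad (fun w' => W (f (x, π (x, w)), w')) w := by
  have hφ : DifferentiableAt ℝ (fun w' => π (x, w')) w := by fun_prop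
  have hfa : DifferentiableAt ℝ (fun a => f (x, a)) (π (x, w)) := by fun_prop
  have hra : DifferentiableAt ℝ (fun a => r (x, a)) (π (x, w)) := by fun_prop
  have hrφ : DifferentiableAt ℝ (fun w' => r (x, π (x, w'))) w :=
    hra.comp (g := fun a => r (x, a)) w hφ
  have hψ : DifferentiableAt ℝ (fun w' => f (x, π (x, w'))) w :=
    hfa.comp (g := fun a => f (x, a)) w hφ
  have hWψ : DifferentiableAt ℝ (fun w' => W (f (x, π (x, w')), w')) w :=
    hW.comp (f := fun w' => (f (x, π (x, w')), w')) w (hψ.prodMk differentiableAt_id)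
  have hreward : grad (fun w' => r (x, π (x, w'))) w = (jacWpi π x w)ᵀ *ᵥ gradA r x (π (x, w)) :=
    grad_comp (g := fun a => r (x, a)) hra hφ
  have hvalue := grad_comp_prodMk hW hψ
  rw [show jacobian (fun w' => f (x, π (x, w'))) w = jacA f x (π (x, w)) * jacWpi π x w from
    jacobian_comp (g := fun a => f (x, a)) hfa hφ] at hvalue
  rw [grad_add hrφ (hWψ.const_mul γ), grad_const_mul hWψ, hreward, hvalue,
    transpose_mul, ← mulVec_mulVec, smul_add, mulVec_add, ← mulVec_smul, add_assoc]

theorem trajW_succ (x₀ : Fin n → ℝ) (w : Fin p → ℝ) (t : ℕ) :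
    trajW f π x₀ w (t + 1) = f (trajW f π x₀ w t, π (trajW f π x₀ w t, w)) :=
  rfl

variable {F : ℕ} {V : ℕ → (Fin n → ℝ) × (Fin p → ℝ) → ℝ}

theorem differentiable_value (hf : Differentiable ℝ f) (hr : Differentiable ℝ r)
    (hπ : Differentiable ℝ π) (hVF : ∀ x w, V F (x, w) = 0)
    (hVrec : ∀ t < F, ∀ x w, V t (x, w) = r (x, π (x, w)) + γ * V (t + 1) (f (x, π (x, w)), w))
    {t : ℕ} (ht : t ≤ F) : Differentiable ℝ (V t) := by
  induction ht using Nat.decreasingInduction with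
  | self =>
    rw [show V F = 0 from funext fun q => hVF q.1 q.2]
    exact differentiable_const 0
  | of_succ t ht ih =>
    rw [show V t = fun q => r (q.1, π q) + γ * V (t + 1) (f (q.1, π q), q.2) from
      funext fun q => hVrec t ht q.1 q.2]
    fun_prop

theorem value_trajW (hVF : ∀ x w, V F (x, w) = 0)
    (hVrec : ∀ t < F, ∀ x w, V t (x, w) = r (x, π (x, w)) + γ * V (t + 1) (f (x, π (x, w)), w))
    (x₀ : Fin n → ℝ) (w : Fin p → ℝ) {t : ℕ} (ht : t ≤ F) :
    V t (trajW f π x₀ w t, w) = ∑ s ∈ Finset.range (F - t),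
      γ ^ s * r (trajW f π x₀ w (t + s), π (trajW f π x₀ w (t + s), w)) := by
  induction ht using Nat.decreasingInduction with
  | self => simp [hVF]
  | of_succ t ht ih =>
    rw [hVrec t ht, ← trajW_succ (f := f) (π := π), ih, show F - t = F - (t + 1) + 1 by omega,
      Finset.sum_range_succ', Finset.mul_sum, add_comm]
    simp only [add_zero, pow_zero, one_mul, pow_succ', mul_assoc, add_right_comm t 1, ← add_assoc]

theorem grad_value_trajW (hf : Differentiable ℝ f) (hr : Differentiable ℝ r)
    (hπ : Differentiable ℝ π) (hVF : ∀ x w, V F (x, w) = 0)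
    (hVrec : ∀ t < F, ∀ x w, V t (x, w) = r (x, π (x, w)) + γ * V (t + 1) (f (x, π (x, w)), w))
    (x₀ : Fin n → ℝ) (w : Fin p → ℝ) {t : ℕ} (ht : t ≤ F) :
    grad (fun w' => V t (trajW f π x₀ w t, w')) w = ∑ s ∈ Finset.range (F - t), γ ^ s •
      (jacWpi π (trajW f π x₀ w (t + s)) w)ᵀ *ᵥ
        (gradA r (trajW f π x₀ w (t + s)) (π (trajW f π x₀ w (t + s), w)) +
          γ • (jacA f (trajW f π x₀ w (t + s)) (π (trajW f π x₀ w (t + s), w)))ᵀ *ᵥ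
            grad (fun y => V (t + s + 1) (y, w)) (trajW f π x₀ w (t + s + 1))) := by
  induction ht using Nat.decreasingInduction with
  | self =>
    simp only [hVF, Nat.sub_self, Finset.range_zero, Finset.sum_empty]
    ext i
    simp [grad]
  | of_succ t ht ih =>
    simp only [hVrec t ht]
    rw [grad_bellman_backup (hπ _) (hf _) (hr _)
        (differentiable_value hf hr hπ hVF hVrec ht _), ← trajW_succ (f := f) (π := π), ih,
      show F - t = F - (t + 1) + 1 by omega, Finset.sum_range_succ', add_comm]
    simp only [add_zero, pow_zero, one_smul, pow_succ', Finset.smul_sum, smul_smul,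
      add_right_comm t 1, ← add_assoc, Nat.succ_eq_add_one]

end Bellman

theorem stmt12_general {n m p : ℕ} (F : ℕ) (γ : ℝ)
    (f : (Fin n → ℝ) × (Fin m → ℝ) → Fin n → ℝ)
    (r : (Fin n → ℝ) × (Fin m → ℝ) → ℝ)
    (hf : ContDiff ℝ 1 f) (hr : ContDiff ℝ 1 r)
    (π : (Fin n → ℝ) × (Fin p → ℝ) → Fin m → ℝ) (hπ : ContDiff ℝ 1 π)
    (x₀ : Fin n → ℝ)
    (J : (Fin p → ℝ) → ℝ)
    (hJ : ∀ w, J w = ∑ t ∈ Finset.range F,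
      γ ^ t * r (trajW f π x₀ w t, π (trajW f π x₀ w t, w)))
    (V : ℕ → (Fin n → ℝ) × (Fin p → ℝ) → ℝ)
    (hVF : ∀ x w, V F (x, w) = 0)
    (hVrec : ∀ t < F, ∀ x w, V t (x, w) =
      r (x, π (x, w)) + γ * V (t + 1) (f (x, π (x, w)), w)) :
    Differentiable ℝ J ∧
    ∀ w : Fin p → ℝ, grad J w =
      ∑ t ∈ Finset.range F, γ ^ t •
        (jacWpi π (trajW f π x₀ w t) w)ᵀ.mulVec
          (gradA r (trajW f π x₀ w t) (π (trajW f π x₀ w t, w)) +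
            γ • (jacA f (trajW f π x₀ w t) (π (trajW f π x₀ w t, w)))ᵀ.mulVec
              (grad (fun y => V (t + 1) (y, w)) (trajW f π x₀ w (t + 1)))) := by
  have hfd := hf.differentiable one_ne_zero
  have hrd := hr.differentiable one_ne_zero
  have hπd := hπ.differentiable one_ne_zero
  have hJV : J = fun w => V 0 (x₀, w) := funext fun w => by
    have h := value_trajW hVF hVrec x₀ w F.zero_le
    simp only [Nat.sub_zero, zero_add] at h
    exact (hJ w).trans h.symm
  subst hJV
  refine ⟨(differentiable_value hfd hrd hπd hVF hVrec F.zero_le).comp (by fun_prop),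
    fun w => ?_⟩
  have h := grad_value_trajW hfd hrd hπd hVF hVrec x₀ w F.zero_le
  simp only [Nat.sub_zero, zero_add] at h
  exact h

/-- backpropagation through time: the policy gradient of the
total reward expands as the discounted sum over time of
`(D_w π)ᵀ ( ∇_a r + γ (D_a f)ᵀ ∇_x V_{t+1} )`. -/
theorem stmt12 {n m p : ℕ} (F : ℕ) (hF : 1 ≤ F) (γ : ℝ)
    (f : (Fin n → ℝ) × (Fin m → ℝ) → Fin n → ℝ)
    (r : (Fin n → ℝ) × (Fin m → ℝ) → ℝ)
    (hf : ContDiff ℝ 1 f) (hr : ContDiff ℝ 1 r)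
    (π : (Fin n → ℝ) × (Fin p → ℝ) → Fin m → ℝ) (hπ : ContDiff ℝ 1 π)
    (x₀ : Fin n → ℝ)
    (J : (Fin p → ℝ) → ℝ)
    (hJ : ∀ w, J w = ∑ t ∈ Finset.range F,
      γ ^ t * r (trajW f π x₀ w t, π (trajW f π x₀ w t, w)))
    (V : ℕ → (Fin n → ℝ) × (Fin p → ℝ) → ℝ)
    (hVF : ∀ x w, V F (x, w) = 0)
    (hVrec : ∀ t < F, ∀ x w, V t (x, w) =
      r (x, π (x, w)) + γ * V (t + 1) (f (x, π (x, w)), w)) :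
    Differentiable ℝ J ∧
    ∀ w : Fin p → ℝ, grad J w =
      ∑ t ∈ Finset.range F, γ ^ t •
        (jacWpi π (trajW f π x₀ w t) w)ᵀ.mulVec
          (gradA r (trajW f π x₀ w t) (π (trajW f π x₀ w t, w)) +
            γ • (jacA f (trajW f π x₀ w t) (π (trajW f π x₀ w t, w)))ᵀ.mulVec
              (grad (fun y => V (t + 1) (y, w)) (trajW f π x₀ w (t + 1)))) :=
  stmt12_general F γ f r hf hr π hπ x₀ J hJ V hVF hVrec
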